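/- arXiv:1902.03974 — 8 statements merged into one kernel-verified Lean document; each statement's English description precedes it below -/
import Mathlib

section
/- Let α be a Boolean algebra and let B be a finite set of elements of α such that the supremum of B equals ⊤ and, for all b₁, b₂ ∈ B, the product b₁ ⊓ b₂ is the supremum of some subset of B. Then the set T = {x : α | ∃ s ⊆ B, x = sup s} of all suprema of subsets of B is a shape topology for ⊤: T is finite, ⊥ ∈ T, ⊤ ∈ T, and for all C, D ∈ T both C ⊔ D ∈ T and C ⊓ D ∈ T. -/
/-- the set of all suprema of subsets of a basis-like family `B`
is a shape topology for `⊤`. -/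
theorem shape_topology_generated_by_basis {α : Type*} [BooleanAlgebra α]
    (B : Finset α) (hsup : B.sup id = ⊤)
    (hprod : ∀ b₁ ∈ B, ∀ b₂ ∈ B, ∃ s : Finset α, s ⊆ B ∧ b₁ ⊓ b₂ = s.sup id)
    (T : Set α) (hT : T = {x : α | ∃ s : Finset α, s ⊆ B ∧ x = s.sup id}) :
    T.Finite ∧ ⊥ ∈ T ∧ ⊤ ∈ T ∧
      ∀ C ∈ T, ∀ D ∈ T, C ⊔ D ∈ T ∧ C ⊓ D ∈ T := by
  classical
  subst hT
  refine ⟨?_, ⟨∅, by simp⟩, ⟨B, le_refl B, hsup.symm⟩, ?_⟩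
  · apply Set.Finite.subset (Set.Finite.image (fun s : Finset α => s.sup id)
      (B.powerset : Finset (Finset α)).finite_toSet)
    rintro x ⟨s, hs, rfl⟩
    exact ⟨s, by simpa using hs, rfl⟩
  · rintro C ⟨s, hs, rfl⟩ D ⟨t, ht, rfl⟩
    constructor
    · exact ⟨s ∪ t, Finset.union_subset hs ht, by rw [Finset.sup_union]⟩
    · refine ⟨s.biUnion (fun b₁ => t.biUnion (fun b₂ =>
        if h : b₁ ∈ B ∧ b₂ ∈ B then (hprod b₁ h.1 b₂ h.2).choose else ∅)), ?_, ?_⟩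
      · intro x hx
        simp only [Finset.mem_biUnion] at hx
        obtain ⟨b₁, hb₁, b₂, hb₂, hx⟩ := hx
        rw [dif_pos ⟨hs hb₁, ht hb₂⟩] at hx
        exact (hprod b₁ (hs hb₁) b₂ (ht hb₂)).choose_spec.1 hx
      · rw [Finset.sup_biUnion]
        rw [Finset.sup_inf_distrib_right]
        refine Finset.sup_congr rfl fun b₁ hb₁ => ?_
        rw [Finset.sup_biUnion, Finset.sup_inf_distrib_left]
        refine Finset.sup_congr rfl fun b₂ hb₂ => ?_
        rw [dif_pos ⟨hs hb₁, ht hb₂⟩]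
        exact (hprod b₁ (hs hb₁) b₂ (ht hb₂)).choose_spec.2
end

section
/- Let T be a shape topology on a Boolean algebra α and let B be a reduced basis for T. Then B is contained in every basis for T; consequently B is the unique minimal basis of T (if B' is another reduced basis for T, then B = B'). -/
variable {α : Type*} [BooleanAlgebra α]

/-- A shape topology: a finite set of parts containing `⊥` and `⊤`,
closed under sum and product. -/
def IsShapeTopology (T : Finset α) : Prop :=
  ⊥ ∈ T ∧ ⊤ ∈ T ∧ ∀ C ∈ T, ∀ D ∈ T, C ⊔ D ∈ T ∧ C ⊓ D ∈ T

/-- `B` is a basis for the shape topology `T`: `T` consists exactly of the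
suprema of subsets of `B`. -/
def IsBasisFor (T B : Finset α) : Prop :=
  ∀ x : α, x ∈ T ↔ ∃ s ⊆ B, x = s.sup id

/-- A basis is reduced if no basis element is the supremum of a set of
basis elements not containing it. -/
def IsReducedBasis (B : Finset α) : Prop :=
  ∀ s ⊆ B, s.sup id ∈ B → s.sup id ∈ s

lemma reduced_basis_subset (T B : Finset α)
    (hB : IsBasisFor T B) (hred : IsReducedBasis B)
    (B' : Finset α) (hB' : IsBasisFor T B') : B ⊆ B' := by
  classical
  intro b hb
  -- b ∈ T since b = sup {b}
  have hbT : b ∈ T := (hB b).2 ⟨{b}, by simpa using hb, by simp⟩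
  obtain ⟨s', hs'B', hbs'⟩ := (hB' b).1 hbT
  -- each c ∈ s' is in T, hence is a sup of a subset of B
  have hchoice : ∀ c ∈ s', ∃ t ⊆ B, c = t.sup id := by
    intro c hc
    have hcT : c ∈ T := (hB' c).2 ⟨{c}, by simpa using hs'B' hc, by simp⟩
    exact (hB c).1 hcT
  choose! t ht hct using hchoice
  set u : Finset α := s'.biUnion t with hu
  have huB : u ⊆ B := by
    intro x hx
    rcases Finset.mem_biUnion.1 hx with ⟨c, hc, hxc⟩
    exact ht c hc hxc
  have husup : u.sup id = b := by
    rw [hu, Finset.sup_biUnion, hbs']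
    exact Finset.sup_congr rfl fun c hc => (hct c hc).symm
  have hbu : b ∈ u := by
    have := hred u huB (by rw [husup]; exact hb)
    rwa [husup] at this
  rcases Finset.mem_biUnion.1 hbu with ⟨c, hc, hbc⟩
  have h1 : b ≤ c := by
    have := Finset.le_sup (f := id) hbc
    rwa [← hct c hc] at this
  have h2 : c ≤ b := by
    have := Finset.le_sup (f := id) hc
    rwa [← hbs'] at this
  have : b = c := le_antisymm h1 h2
  exact this ▸ hs'B' hc

/-- a reduced basis is contained in every basis, hence is the
unique minimal basis. -/
theorem reduced_basis_unique_minimal (T B : Finset α)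
    (hT : IsShapeTopology T) (hB : IsBasisFor T B) (hred : IsReducedBasis B) :
    (∀ B' : Finset α, IsBasisFor T B' → B ⊆ B') ∧
      (∀ B' : Finset α, IsBasisFor T B' → IsReducedBasis B' → B = B') := by
  refine ⟨fun B' hB' => reduced_basis_subset T B hB hred B' hB', fun B' hB' hred' => ?_⟩
  exact Finset.Subset.antisymm (reduced_basis_subset T B hB hred B' hB')
    (reduced_basis_subset T B' hB' hred' B hB)
end

section
/- Let T be a shape topology on a Boolean algebra α with basis B, and let x be an element of α. Then the set B_x = {x ⊓ b | b ∈ B} is a basis for the subshape topology T_x, i.e. T_x = {y : α | ∃ s ⊆ B_x, y = sup s}. -/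
variable {α : Type*} [BooleanAlgebra α]

/-- `B_x = {x ⊓ b | b ∈ B}` is a basis for the subshape
topology `T_x = {x ⊓ C | C ∈ T}`. -/
theorem subshape_basis [DecidableEq α] (T B : Finset α)
    (hT : IsShapeTopology T) (hB : IsBasisFor T B) (x : α) :
    ∀ y : α, y ∈ T.image (fun C => x ⊓ C) ↔
      ∃ s ⊆ B.image (fun b => x ⊓ b), y = s.sup id := by
  intro y
  constructor
  · rintro hy
    obtain ⟨C, hC, rfl⟩ := Finset.mem_image.mp hy
    obtain ⟨s, hsB, rfl⟩ := (hB C).mp hC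
    refine ⟨s.image (fun b => x ⊓ b), Finset.image_subset_image hsB, ?_⟩
    rw [Finset.sup_image]
    simpa using Finset.sup_inf_distrib_left s id x
  · rintro ⟨s, hs, rfl⟩
    classical
    set t := B.filter (fun b => x ⊓ b ∈ s) with ht
    have himg : t.image (fun b => x ⊓ b) = s := by
      apply Finset.Subset.antisymm
      · intro z hz
        obtain ⟨b, hb, rfl⟩ := Finset.mem_image.mp hz
        exact (Finset.mem_filter.mp hb).2
      · intro z hz
        obtain ⟨b, hb, rfl⟩ := Finset.mem_image.mp (hs hz)
        exact Finset.mem_image.mpr ⟨b, Finset.mem_filter.mpr ⟨hb, hz⟩, rfl⟩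
    have hCT : t.sup id ∈ T := (hB _).mpr ⟨t, Finset.filter_subset _ _, rfl⟩
    refine Finset.mem_image.mpr ⟨t.sup id, hCT, ?_⟩
    rw [Finset.sup_inf_distrib_left, ← himg, Finset.sup_image]; rfl
end

section
/- Let T be a shape topology on a Boolean algebra α and let A, B ∈ T be open parts, each connected in its own subshape topology (T_A and T_B respectively). If A ⊓ B ≠ ⊥, then the open part A ⊔ B is connected in its subshape topology T_{A ⊔ B}. -/
variable {α : Type*} [BooleanAlgebra α]

/-- A part `x` is connected in the subshape topology `T_x = {x ⊓ C | C ∈ T}`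
if it has no separation there. -/
def ConnectedInSub [DecidableEq α] (T : Finset α) (x : α) : Prop :=
  ¬ ∃ A ∈ T.image (fun E => x ⊓ E), ∃ B ∈ T.image (fun E => x ⊓ E),
      A ≠ ⊥ ∧ B ≠ ⊥ ∧ A ⊓ B = ⊥ ∧ A ⊔ B = x

/-- a sum of two connected, non-disjoint open parts is
connected in its subshape topology. -/
theorem sup_of_connected_open_parts_connected [DecidableEq α]
    (T : Finset α) (hT : IsShapeTopology T)
    (A B : α) (hA : A ∈ T) (hB : B ∈ T)
    (hAc : ConnectedInSub T A) (hBc : ConnectedInSub T B)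
    (hmeet : A ⊓ B ≠ ⊥) :
    ConnectedInSub T (A ⊔ B) := by
  rintro ⟨P, hP, Q, hQ, hPne, hQne, hPQ, hsup⟩
  simp only [Finset.mem_image] at hP hQ
  obtain ⟨E, hE, rfl⟩ := hP
  obtain ⟨F, hF, rfl⟩ := hQ
  have hEF : A ⊔ B ≤ E ⊔ F := by
    calc A ⊔ B = (A ⊔ B) ⊓ E ⊔ (A ⊔ B) ⊓ F := hsup.symm
      _ ≤ E ⊔ F := sup_le_sup inf_le_right inf_le_right
  have key : ∀ x : α, ConnectedInSub T x → x ≤ E ⊔ F →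
      (x ⊓ E) ⊓ (x ⊓ F) = ⊥ → x ≤ E ∨ x ≤ F := by
    intro x hxc hxle hxdisj
    by_contra h
    push_neg at h
    apply hxc
    refine ⟨x ⊓ E, ?_, x ⊓ F, ?_, ?_, ?_, hxdisj, ?_⟩
    · exact Finset.mem_image.mpr ⟨E, hE, rfl⟩
    · exact Finset.mem_image.mpr ⟨F, hF, rfl⟩
    · intro hb
      apply h.2
      have : x ⊓ (E ⊔ F) = x := inf_eq_left.mpr hxle
      have hx : x ⊓ E ⊔ x ⊓ F = x := by rw [← inf_sup_left, this]
      rw [hb, bot_sup_eq] at hx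
      exact inf_eq_left.mp hx
    · intro hb
      apply h.1
      have : x ⊓ (E ⊔ F) = x := inf_eq_left.mpr hxle
      have hx : x ⊓ E ⊔ x ⊓ F = x := by rw [← inf_sup_left, this]
      rw [hb, sup_bot_eq] at hx
      exact inf_eq_left.mp hx
    · rw [← inf_sup_left]; exact inf_eq_left.mpr hxle
  have hdisjA : (A ⊓ E) ⊓ (A ⊓ F) = ⊥ := by
    apply le_bot_iff.mp
    calc (A ⊓ E) ⊓ (A ⊓ F) ≤ ((A ⊔ B) ⊓ E) ⊓ ((A ⊔ B) ⊓ F) :=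
          inf_le_inf (inf_le_inf_right _ le_sup_left) (inf_le_inf_right _ le_sup_left)
      _ = ⊥ := hPQ
  have hdisjB : (B ⊓ E) ⊓ (B ⊓ F) = ⊥ := by
    apply le_bot_iff.mp
    calc (B ⊓ E) ⊓ (B ⊓ F) ≤ ((A ⊔ B) ⊓ E) ⊓ ((A ⊔ B) ⊓ F) :=
          inf_le_inf (inf_le_inf_right _ le_sup_right) (inf_le_inf_right _ le_sup_right)
      _ = ⊥ := hPQ
  have hAEF := key A hAc (le_trans le_sup_left hEF) hdisjA
  have hBEF := key B hBc (le_trans le_sup_right hEF) hdisjB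
  -- helper: if both ≤ same side, the other part of the separation is ⊥
  have same : ∀ hAB : A ⊔ B ≤ E, False := by
    intro hAB
    apply hQne
    have hPeq : (A ⊔ B) ⊓ E = A ⊔ B := inf_eq_left.mpr hAB
    have : (A ⊔ B) ⊓ F ≤ (A ⊔ B) ⊓ E := by rw [hPeq]; exact inf_le_left
    have := inf_eq_left.mpr this
    rw [inf_comm] at this
    rw [← this, hPQ]
  have same' : ∀ hAB : A ⊔ B ≤ F, False := by
    intro hAB
    apply hPne
    have hQeq : (A ⊔ B) ⊓ F = A ⊔ B := inf_eq_left.mpr hAB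
    have : (A ⊔ B) ⊓ E ≤ (A ⊔ B) ⊓ F := by rw [hQeq]; exact inf_le_left
    have := inf_eq_left.mpr this
    rw [← this, hPQ]
  rcases hAEF with hAE | hAF <;> rcases hBEF with hBE | hBF
  · exact same (sup_le hAE hBE)
  · apply hmeet
    apply le_bot_iff.mp
    calc A ⊓ B ≤ ((A ⊔ B) ⊓ E) ⊓ ((A ⊔ B) ⊓ F) :=
          le_inf (le_inf (le_trans inf_le_left le_sup_left) (le_trans inf_le_left hAE))
                 (le_inf (le_trans inf_le_right le_sup_right) (le_trans inf_le_right hBF))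
      _ = ⊥ := hPQ
  · apply hmeet
    apply le_bot_iff.mp
    calc A ⊓ B ≤ ((A ⊔ B) ⊓ E) ⊓ ((A ⊔ B) ⊓ F) :=
          le_inf (le_inf (le_trans inf_le_right le_sup_right) (le_trans inf_le_right hBE))
                 (le_inf (le_trans inf_le_left le_sup_left) (le_trans inf_le_left hAF))
      _ = ⊥ := hPQ
  · exact same' (sup_le hAF hBF)
end

section
/- Let T be a shape topology on a Boolean algebra α generated by a basis B whose elements are pairwise disjoint (for all b, b' ∈ B with b ≠ b', b ⊓ b' = ⊥). Then every open part is closed-open: for every C ∈ T one has Cᶜ ∈ T. -/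
variable {α : Type*} [BooleanAlgebra α]

/-- a basis of pairwise-disjoint parts makes every open part
closed-open. -/
theorem pairwise_disjoint_basis_clopen (T B : Finset α)
    (hT : IsShapeTopology T) (hB : IsBasisFor T B)
    (hdisj : ∀ b ∈ B, ∀ b' ∈ B, b ≠ b' → b ⊓ b' = ⊥) :
    ∀ C ∈ T, Cᶜ ∈ T := by
  classical
  intro C hC
  obtain ⟨s, hsB, rfl⟩ := (hB C).mp hC
  -- sup of B is ⊤
  obtain ⟨t, htB, htop⟩ := (hB ⊤).mp hT.2.1
  have hBtop : B.sup id = ⊤ := by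
    apply top_unique
    rw [htop]
    exact Finset.sup_mono htB
  have hmem : ((B \ s).sup id) ∈ T := (hB _).mpr ⟨B \ s, Finset.sdiff_subset, rfl⟩
  have hcompl : IsCompl (s.sup id) ((B \ s).sup id) := by
    constructor
    · rw [Finset.disjoint_sup_left]
      intro b hb
      rw [Finset.disjoint_sup_right]
      intro b' hb'
      have hne : b ≠ b' := by
        rintro rfl
        exact (Finset.mem_sdiff.mp hb').2 hb
      exact disjoint_iff.mpr (hdisj b (hsB hb) b' (Finset.mem_sdiff.mp hb').1 hne)
    · rw [codisjoint_iff, ← Finset.sup_union, Finset.union_sdiff_of_subset hsB, hBtop]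
  rwa [hcompl.compl_eq]
end

section
/- Let T be a shape topology on a Boolean algebra α with reduced basis B, and suppose every open part is closed-open (for every C ∈ T, Cᶜ ∈ T). Then the elements of B are pairwise disjoint: for all b, b' ∈ B with b ≠ b', b ⊓ b' = ⊥. -/
variable {α : Type*} [BooleanAlgebra α]

/-- if every open part is closed-open, the reduced basis
elements are pairwise disjoint. -/
theorem clopen_topology_reduced_basis_disjoint (T B : Finset α)
    (hT : IsShapeTopology T) (hB : IsBasisFor T B) (hred : IsReducedBasis B)
    (hclopen : ∀ C ∈ T, Cᶜ ∈ T) :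
    ∀ b ∈ B, ∀ b' ∈ B, b ≠ b' → b ⊓ b' = ⊥ := by
  classical
  have hBT : ∀ b ∈ B, b ∈ T := by
    intro b hb
    rw [hB]
    exact ⟨{b}, Finset.singleton_subset_iff.mpr hb, by simp⟩
  have key : ∀ b ∈ B, ∀ b' ∈ B, b' ≤ b ∨ b ⊓ b' = ⊥ := by
    intro b hb b' hb'
    have hbT := hBT b hb
    have hb'T := hBT b' hb'
    have hbc : bᶜ ∈ T := hclopen b hbT
    have h1 : b' ⊓ b ∈ T := (hT.2.2 b' hb'T b hbT).2
    have h2 : b' ⊓ bᶜ ∈ T := (hT.2.2 b' hb'T bᶜ hbc).2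
    obtain ⟨s1, hs1B, hs1⟩ := (hB (b' ⊓ b)).mp h1
    obtain ⟨s2, hs2B, hs2⟩ := (hB (b' ⊓ bᶜ)).mp h2
    have hsup : (s1 ∪ s2).sup id = b' := by
      rw [Finset.sup_union, ← hs1, ← hs2, ← inf_sup_left]
      simp
    have hmem : b' ∈ s1 ∪ s2 := by
      have := hred (s1 ∪ s2) (Finset.union_subset hs1B hs2B) (by rw [hsup]; exact hb')
      rwa [hsup] at this
    rcases Finset.mem_union.mp hmem with h | h
    · left
      have : b' ≤ s1.sup id := Finset.le_sup (f := id) h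
      rw [← hs1] at this
      exact this.trans inf_le_right
    · right
      have : b' ≤ s2.sup id := Finset.le_sup (f := id) h
      rw [← hs2] at this
      have hle : b' ≤ bᶜ := this.trans inf_le_right
      exact disjoint_iff.mp (le_compl_iff_disjoint_left.mp hle)
  intro b hb b' hb' hne
  rcases key b hb b' hb' with h1 | h1
  · rcases key b' hb' b hb with h2 | h2
    · exact absurd (le_antisymm h2 h1) hne
    · rw [inf_comm] at h2; exact h2
  · exact h1
end

section
/- Let T be a shape topology on a Boolean algebra α with reduced basis B. Then every basis element b ∈ B is join-prime in T: for all open parts C, D ∈ T, if b ≤ C ⊔ D then b ≤ C or b ≤ D. In particular each b ∈ B is join-irreducible in T: if b = C ⊔ D with C, D ∈ T, then b = C or b = D. -/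
variable {α : Type*} [BooleanAlgebra α]

/-- every element of a reduced basis is join-prime (hence
join-irreducible) in `T`. -/
theorem reduced_basis_join_prime (T B : Finset α)
    (hT : IsShapeTopology T) (hB : IsBasisFor T B) (hred : IsReducedBasis B)
    (b : α) (hb : b ∈ B) :
    (∀ C ∈ T, ∀ D ∈ T, b ≤ C ⊔ D → b ≤ C ∨ b ≤ D) ∧
      (∀ C ∈ T, ∀ D ∈ T, b = C ⊔ D → b = C ∨ b = D) := by
  classical
  have hbT : b ∈ T := by
    rw [hB]
    exact ⟨{b}, by simpa using hb, by simp⟩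
  have prime : ∀ C ∈ T, ∀ D ∈ T, b ≤ C ⊔ D → b ≤ C ∨ b ≤ D := by
    intro C hC D hD hle
    obtain ⟨_, _, hclos⟩ := hT
    have hbC : b ⊓ C ∈ T := (hclos b hbT C hC).2
    have hbD : b ⊓ D ∈ T := (hclos b hbT D hD).2
    obtain ⟨s, hsB, hs⟩ := (hB (b ⊓ C)).1 hbC
    obtain ⟨t, htB, ht⟩ := (hB (b ⊓ D)).1 hbD
    have hunion : (s ∪ t).sup id = b := by
      rw [Finset.sup_union, ← hs, ← ht, ← inf_sup_left]
      exact inf_eq_left.2 hle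
    have hmem : b ∈ s ∪ t := by
      have := hred (s ∪ t) (Finset.union_subset hsB htB) (by rw [hunion]; exact hb)
      rwa [hunion] at this
    rcases Finset.mem_union.1 hmem with h | h
    · left
      calc b = id b := rfl
        _ ≤ s.sup id := Finset.le_sup h
        _ = b ⊓ C := hs.symm
        _ ≤ C := inf_le_right
    · right
      calc b = id b := rfl
        _ ≤ t.sup id := Finset.le_sup h
        _ = b ⊓ D := ht.symm
        _ ≤ D := inf_le_right
  refine ⟨prime, ?_⟩
  intro C hC D hD heq
  rcases prime C hC D hD heq.le with h | h
  · exact Or.inl (le_antisymm h (heq ▸ le_sup_left))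
  · exact Or.inr (le_antisymm h (heq ▸ le_sup_right))
end

section
/- Let T be a shape topology on a Boolean algebra α with reduced basis B, and define the map φ from T to subsets of B by φ(C) = {b ∈ B | b ≤ C}. Then φ is injective (moreover C = sup φ(C) for every C ∈ T), and φ is a lattice isomorphism onto its image: for all C, D ∈ T, φ(C ⊔ D) = φ(C) ∪ φ(D), φ(C ⊓ D) = φ(C) ∩ φ(D), and C ≤ D if and only if φ(C) ⊆ φ(D). Hence T is isomorphic to the finite topology of sets {φ(C) | C ∈ T} on the set B, i.e. to the space of the shape relative to T. -/
open scoped Classical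

variable {α : Type*} [BooleanAlgebra α]

private lemma recover (T B : Finset α) (hB : IsBasisFor T B) :
    ∀ C ∈ T, C = (B.filter (fun b => b ≤ C)).sup id := by
  intro C hC
  obtain ⟨s, hsB, hCs⟩ := (hB C).1 hC
  apply le_antisymm
  · calc C = s.sup id := hCs
      _ ≤ _ := Finset.sup_mono (fun b hb => Finset.mem_filter.2
          ⟨hsB hb, hCs ▸ Finset.le_sup (f := id) hb⟩)
  · exact Finset.sup_le fun b hb => (Finset.mem_filter.1 hb).2

private lemma split (T B : Finset α) (hT : IsShapeTopology T) (hB : IsBasisFor T B)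
    (hred : IsReducedBasis B) :
    ∀ b ∈ B, ∀ C ∈ T, ∀ D ∈ T, b ≤ C ⊔ D → b ≤ C ∨ b ≤ D := by
  intro b hb C hC D hD hbCD
  have hbT : b ∈ T := (hB b).2 ⟨{b}, by simpa using hb, by simp⟩
  have h1 : b ⊓ C ∈ T := (hT.2.2 b hbT C hC).2
  have h2 : b ⊓ D ∈ T := (hT.2.2 b hbT D hD).2
  obtain ⟨s1, hs1B, hs1⟩ := (hB _).1 h1
  obtain ⟨s2, hs2B, hs2⟩ := (hB _).1 h2
  have hbsum : b = (s1 ∪ s2).sup id := by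
    have : b = b ⊓ C ⊔ b ⊓ D := by
      rw [← inf_sup_left]; exact (inf_eq_left.2 hbCD).symm
    rw [this, hs1, hs2, Finset.sup_union]
  have hmem : b ∈ s1 ∪ s2 := by
    have := hred (s1 ∪ s2) (Finset.union_subset hs1B hs2B) (by rw [← hbsum]; exact hb)
    rwa [← hbsum] at this
  rcases Finset.mem_union.1 hmem with h | h
  · left
    calc b ≤ s1.sup id := Finset.le_sup (f := id) h
      _ = b ⊓ C := hs1.symm
      _ ≤ C := inf_le_right
  · right
    calc b ≤ s2.sup id := Finset.le_sup (f := id) h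
      _ = b ⊓ D := hs2.symm
      _ ≤ D := inf_le_right

/-- the map `φ C = {b ∈ B | b ≤ C}` recovers each open part as
the supremum of its value, is injective on `T`, and is a lattice isomorphism
of `T` onto its image: it turns sums into unions, products into
intersections, and reflects the order. -/
theorem space_of_shape_isomorphism (T B : Finset α)
    (hT : IsShapeTopology T) (hB : IsBasisFor T B) (hred : IsReducedBasis B) :
    (∀ C ∈ T, C = (B.filter (fun b => b ≤ C)).sup id) ∧
    (∀ C ∈ T, ∀ D ∈ T,
      B.filter (fun b => b ≤ C) = B.filter (fun b => b ≤ D) → C = D) ∧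
    (∀ C ∈ T, ∀ D ∈ T,
      B.filter (fun b => b ≤ C ⊔ D)
        = B.filter (fun b => b ≤ C) ∪ B.filter (fun b => b ≤ D) ∧
      B.filter (fun b => b ≤ C ⊓ D)
        = B.filter (fun b => b ≤ C) ∩ B.filter (fun b => b ≤ D) ∧
      (C ≤ D ↔ B.filter (fun b => b ≤ C) ⊆ B.filter (fun b => b ≤ D))) := by
  have hrec := recover T B hB
  refine ⟨hrec, ?_, ?_⟩
  · intro C hC D hD h
    rw [hrec C hC, hrec D hD, h]
  · intro C hC D hD
    refine ⟨?_, ?_, ?_⟩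
    · ext b
      simp only [Finset.mem_union, Finset.mem_filter]
      constructor
      · rintro ⟨hb, hle⟩
        rcases split T B hT hB hred b hb C hC D hD hle with h | h
        · exact Or.inl ⟨hb, h⟩
        · exact Or.inr ⟨hb, h⟩
      · rintro (⟨hb, h⟩ | ⟨hb, h⟩)
        · exact ⟨hb, h.trans le_sup_left⟩
        · exact ⟨hb, h.trans le_sup_right⟩
    · ext b
      simp only [Finset.mem_inter, Finset.mem_filter, le_inf_iff]
      tauto
    · constructor
      · intro h b hb
        simp only [Finset.mem_filter] at *
        exact ⟨hb.1, hb.2.trans h⟩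
      · intro h
        calc C = (B.filter (fun b => b ≤ C)).sup id := hrec C hC
          _ ≤ D := Finset.sup_le fun b hb => (Finset.mem_filter.1 (h hb)).2
end
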